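/- (Redistribute-to-the-right jump sizes are IPCW weights.) For every observed time v ∈ {X_1,…,X_n}, the quantity (1/n) · ∏_{u < v} (1 + ΔC(u)/Y(u+)) equals 1/(n · K̂(v−)). -/

import Mathlib

/-!
An observation with `X_i ≥ u` is either still at risk after `u`, a failure at `u` or a censoring
at `u`, so `Y†(u) = Y(u+) + ΔC(u)`. For `u` strictly before an observed time, `Y(u+) > 0`, and then
`1 + ΔC(u)/Y(u+) = (Y(u+) + ΔC(u))/Y(u+) = (1 - ΔC(u)/Y†(u))⁻¹`; taking the product over `u < v`
turns the left-hand side into `(1/n) · K̂(v−)⁻¹`.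
-/

open Finset
open scoped Classical

noncomputable section

namespace SurvStmt

/-- The finite set of distinct observed times `{X_1, …, X_n}`. -/
def times {n : ℕ} (X : Fin n → ℝ) : Finset ℝ := Finset.image X Finset.univ

/-- `Y(t) = #{i : X_i ≥ t}`, as a real number. -/
def Yat {n : ℕ} (X : Fin n → ℝ) (t : ℝ) : ℝ :=
  ((Finset.univ.filter (fun i => t ≤ X i)).card : ℝ)

/-- `Y(t+) = #{i : X_i > t}`, as a real number. -/
def Yplus {n : ℕ} (X : Fin n → ℝ) (t : ℝ) : ℝ :=
  ((Finset.univ.filter (fun i => t < X i)).card : ℝ)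

/-- `ΔN(t) = #{i : X_i = t, D_i = 1}`, as a real number. -/
def dN {n : ℕ} (X : Fin n → ℝ) (D : Fin n → Bool) (t : ℝ) : ℝ :=
  ((Finset.univ.filter (fun i => X i = t ∧ D i = true)).card : ℝ)

/-- `ΔC(t) = #{i : X_i = t, D_i = 0}`, as a real number. -/
def dC {n : ℕ} (X : Fin n → ℝ) (D : Fin n → Bool) (t : ℝ) : ℝ :=
  ((Finset.univ.filter (fun i => X i = t ∧ D i = false)).card : ℝ)

/-- `Y†(t) = Y(t) − ΔN(t)`. -/
def Ydag {n : ℕ} (X : Fin n → ℝ) (D : Fin n → Bool) (t : ℝ) : ℝ :=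
  Yat X t - dN X D t

/-- `τ = max_i X_i`, the largest observation time (0 if there is no data). -/
def tau {n : ℕ} (X : Fin n → ℝ) : ℝ := ((times X).max).unbotD 0

/-- Censoring product-limit estimator `K̂(t) = ∏_{u ≤ t} (1 − ΔC(u)/Y†(u))`. -/
def Khat {n : ℕ} (X : Fin n → ℝ) (D : Fin n → Bool) (t : ℝ) : ℝ :=
  ∏ u ∈ (times X).filter (fun u => u ≤ t), (1 - dC X D u / Ydag X D u)

/-- Left limit `K̂(t−) = ∏_{u < t} (1 − ΔC(u)/Y†(u))`. -/
def Kminus {n : ℕ} (X : Fin n → ℝ) (D : Fin n → Bool) (t : ℝ) : ℝ :=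
  ∏ u ∈ (times X).filter (fun u => u < t), (1 - dC X D u / Ydag X D u)

/-- Failure product-limit estimator `Ŝ_PL(t) = ∏_{u ≤ t} (1 − ΔN(u)/Y(u))`. -/
def SPL {n : ℕ} (X : Fin n → ℝ) (D : Fin n → Bool) (t : ℝ) : ℝ :=
  ∏ u ∈ (times X).filter (fun u => u ≤ t), (1 - dN X D u / Yat X u)

/-- Left limit `Ŝ_PL(t−) = ∏_{u < t} (1 − ΔN(u)/Y(u))`. -/
def SPLminus {n : ℕ} (X : Fin n → ℝ) (D : Fin n → Bool) (t : ℝ) : ℝ :=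
  ∏ u ∈ (times X).filter (fun u => u < t), (1 - dN X D u / Yat X u)

/-- IPCW estimator `F̂_IPCW(t) = (1/n) ∑_i D_i 1{X_i ≤ t} / K̂(X_i−)`. -/
def FIPCW {n : ℕ} (X : Fin n → ℝ) (D : Fin n → Bool) (t : ℝ) : ℝ :=
  (1 / (n : ℝ)) * ∑ i : Fin n,
    (if D i = true then (1 : ℝ) else 0) * (if X i ≤ t then (1 : ℝ) else 0) / Kminus X D (X i)

/-- IPCW survival estimator `S̃_IPCW(t) = (1/n) ∑_i D_i 1{X_i > t} / K̂(X_i−)`. -/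
def SIPCW {n : ℕ} (X : Fin n → ℝ) (D : Fin n → Bool) (t : ℝ) : ℝ :=
  (1 / (n : ℝ)) * ∑ i : Fin n,
    (if D i = true then (1 : ℝ) else 0) * (if t < X i then (1 : ℝ) else 0) / Kminus X D (X i)

/-- RTTR jump weight `J(v) = 1/(n · K̂(v−))`. -/
def Jw {n : ℕ} (X : Fin n → ℝ) (D : Fin n → Bool) (v : ℝ) : ℝ :=
  1 / ((n : ℝ) * Kminus X D v)

/-- Redistribute-to-the-right estimator
`Ŝ_RTTR(t) = 1 − ∑_{v ≤ t} [J(v) ΔN(v) 1{v < τ} + J(τ) Y(τ) 1{v = τ}]`. -/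
def SRTTR {n : ℕ} (X : Fin n → ℝ) (D : Fin n → Bool) (t : ℝ) : ℝ :=
  1 - ∑ v ∈ (times X).filter (fun v => v ≤ t),
      (Jw X D v * dN X D v * (if v < tau X then (1 : ℝ) else 0)
        + Jw X D (tau X) * Yat X (tau X) * (if v = tau X then (1 : ℝ) else 0))

theorem inv_one_sub_div_add {K : Type*} [Field K] {a b : K} (ha : a ≠ 0) (hab : a + b ≠ 0) :
    (1 - b / (a + b))⁻¹ = 1 + b / a := by
  rw [one_sub_div hab, add_sub_cancel_right, inv_div, add_div, div_self ha]

section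

variable {n : ℕ} (X : Fin n → ℝ) (D : Fin n → Bool)

theorem Yat_eq_Yplus_add_dN_add_dC (t : ℝ) : Yat X t = Yplus X t + dN X D t + dC X D t := by
  simp only [Yat, Yplus, dN, dC, card_filter]
  push_cast
  rw [← sum_add_distrib, ← sum_add_distrib]
  refine sum_congr rfl fun i _ => ?_
  rcases lt_trichotomy t (X i) with h | rfl | h
  · simp [h, h.ne', h.le]
  · cases D i <;> simp
  · simp [h.not_ge, h.not_gt, h.ne]

theorem Ydag_eq_Yplus_add_dC (t : ℝ) : Ydag X D t = Yplus X t + dC X D t := by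
  rw [Ydag, Yat_eq_Yplus_add_dN_add_dC X D]
  ring

theorem Yplus_pos_of_lt {t : ℝ} {j : Fin n} (h : t < X j) : 0 < Yplus X t := by
  unfold Yplus
  exact_mod_cast card_pos.mpr ⟨j, by simp [h]⟩

theorem one_add_dC_div_Yplus_of_lt {t : ℝ} {j : Fin n} (h : t < X j) :
    1 + dC X D t / Yplus X t = (1 - dC X D t / Ydag X D t)⁻¹ := by
  have hY : 0 < Yplus X t := Yplus_pos_of_lt X h
  have hC : 0 ≤ dC X D t := by unfold dC; positivity
  rw [Ydag_eq_Yplus_add_dC, inv_one_sub_div_add hY.ne' (by positivity)]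

end

theorem stmt15_general (n : ℕ) (X : Fin n → ℝ) (D : Fin n → Bool) :
    ∀ v ∈ times X,
      (1 / (n : ℝ)) * ∏ u ∈ (times X).filter (fun u => u < v),
          (1 + dC X D u / Yplus X u)
        = 1 / ((n : ℝ) * Kminus X D v) := by
  intro v hv
  obtain ⟨j, -, rfl⟩ := mem_image.mp hv
  rw [prod_congr rfl fun u hu => one_add_dC_div_Yplus_of_lt X D (mem_filter.mp hu).2,
    prod_inv_distrib, Kminus, one_div, one_div, mul_inv]

/-- RTTR jump sizes are IPCW weights: for every observed time `v`,
`(1/n) ∏_{u < v} (1 + ΔC(u)/Y(u+)) = 1/(n K̂(v−))`. -/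
theorem stmt15 (n : ℕ) (hn : 0 < n) (X : Fin n → ℝ) (D : Fin n → Bool)
    (hX : ∀ i, 0 < X i) :
    ∀ v ∈ times X,
      (1 / (n : ℝ)) * ∏ u ∈ (times X).filter (fun u => u < v),
          (1 + dC X D u / Yplus X u)
        = 1 / ((n : ℝ) * Kminus X D v) :=
  stmt15_general n X D

end SurvStmt
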